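/- Suppose g : ℝ → ℂ satisfies ∫_{−∞}^∞ |g(τ)| e^{(β−1/2)|τ|} dτ < ∞ for some β ∈ (0, 2π), and define u(r,θ) = √π e^{−r/2} ∫_{−∞}^∞ Re[I_{iτ}(r/2)] e^{θτ} g(τ)/cosh(πτ) dτ for r > 0 and 0 ≤ θ < β. Then for each fixed θ the integral converges absolutely, and moreover u satisfies the PDE ∂²u/∂r² + (1/r + 1) ∂u/∂r + (1/r²) ∂²u/∂θ² + u/(2r) = 0 on the wedge {(r,θ) : r > 0, 0 ≤ θ < β}. -/

import Mathlib

open MeasureTheory Complex Real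

/-- The modified Bessel function of the first kind. -/
noncomputable def besselI (ν z : ℂ) : ℂ :=
  ∑' k : ℕ, (z / 2) ^ (2 * (k : ℂ) + ν) / ((Nat.factorial k : ℂ) * Complex.Gamma ((k : ℂ) + ν + 1))

/-- The function `u(r,θ)` given by the Lebedev–Skalskaya type integral (4.3). -/
noncomputable def LSsolution (g : ℝ → ℂ) (r θ : ℝ) : ℂ :=
  (Real.sqrt π * Real.exp (-r / 2) : ℝ) •
    ∫ τ : ℝ,
      (((besselI (Complex.I * τ) ((r : ℂ) / 2)).re * Real.exp (θ * τ) /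
          Real.cosh (π * τ) : ℝ) : ℂ) * g τ

open scoped Nat ComplexConjugate Topology

/-!
Every `r`- or `θ`-derivative of `LSsolution` may be taken under the integral sign: the `j`-th
`r`-derivative of the Bessel series is bounded, locally uniformly in `r`, by a constant times
`(1 + |τ|) ^ j / |Γ(1 + iτ)|`, and `|Γ(1 + iτ)|² = πτ / sinh(πτ) ≥ e^{-π|τ|}`. Against the weight
`e^{θτ} / cosh(πτ)` with `|θ| ≤ β` this leaves a polynomial times `e^{(β - π/2)|τ|}`, which the
hypothesis on `g` dominates. Once the factor `e^{-r/2}` is pulled out, the PDE becomes, under the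
integral, the modified Bessel equation `x² f'' + x f' + τ² f = (x² / 4) f` for
`f(x) = Re I_{iτ}(x / 2)`, the `τ²` term coming from `∂²_θ e^{θτ} = τ² e^{θτ}`.
-/

lemma Real.exp_neg_abs_le_div_sinh {y : ℝ} (hy : y ≠ 0) : Real.exp (-|y|) ≤ y / Real.sinh y := by
  wlog hpos : 0 < y generalizing y
  · simpa [Real.sinh_neg, neg_div_neg_eq] using this (neg_ne_zero.2 hy) (by grind)
  -- `2 sinh y = e^y (1 - e^{-2y}) ≤ 2y e^y`
  rw [abs_of_pos hpos, le_div_iff₀ (Real.sinh_pos_iff.2 hpos), Real.sinh_eq]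
  have hlin := Real.add_one_le_exp (-(2 * y))
  have hsq : Real.exp (-y) * Real.exp (-y) = Real.exp (-(2 * y)) := by rw [← Real.exp_add]; ring_nf
  have hinv : Real.exp (-y) * Real.exp y = 1 := by rw [← Real.exp_add]; simp
  nlinarith [Real.exp_pos (-y)]

namespace Complex

lemma factorial_mul_norm_Gamma_le_norm_Gamma_add {s : ℂ} (hs : 1 ≤ s.re) (k : ℕ) :
    (k ! : ℝ) * ‖Gamma s‖ ≤ ‖Gamma (s + k)‖ := by
  induction k with
  | zero => simp
  | succ k ih =>
    have hre : (k + 1 : ℝ) ≤ ‖s + k‖ := by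
      simpa using (show (k + 1 : ℝ) ≤ (s + k).re by simp; linarith).trans (re_le_norm _)
    have hne : s + k ≠ 0 := norm_pos_iff.1 ((by positivity : (0 : ℝ) < k + 1).trans_le hre)
    calc ((k + 1) ! : ℝ) * ‖Gamma s‖ = (k + 1) * ((k ! : ℝ) * ‖Gamma s‖) := by
          push_cast [Nat.factorial_succ]; ring
      _ ≤ ‖s + k‖ * ‖Gamma (s + k)‖ := by gcongr
      _ = ‖Gamma (s + ↑(k + 1))‖ := by
          rw [Nat.cast_succ, ← add_assoc, Gamma_add_one _ hne, norm_mul]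

lemma norm_Gamma_one_add_I_mul_sq {τ : ℝ} (hτ : τ ≠ 0) :
    ‖Gamma (1 + I * τ)‖ ^ 2 = π * τ / Real.sinh (π * τ) := by
  have hIτ : I * τ ≠ 0 := by simp [hτ]
  have hsinh : Real.sinh (π * τ) ≠ 0 := by simp [Real.sinh_eq_zero, Real.pi_ne_zero, hτ]
  have hconj : conj (Gamma (1 + I * τ)) = Gamma (1 - I * τ) := by
    rw [← Gamma_conj]; simp [conj_ofReal, sub_eq_add_neg]
  have hsin : sin (π * (I * τ)) = Real.sinh (π * τ) * I := by
    rw [show (π : ℂ) * (I * τ) = ((π * τ : ℝ) : ℂ) * I by push_cast; ring, sin_mul_I, ofReal_sinh]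
  apply ofReal_injective
  rw [ofReal_pow, ← mul_conj', hconj, add_comm, Gamma_add_one _ hIτ, mul_assoc,
    Gamma_mul_Gamma_one_sub, hsin]
  push_cast
  field_simp

lemma exp_neg_pi_mul_abs_div_two_le_norm_Gamma_one_add_I_mul (τ : ℝ) :
    Real.exp (-(π * |τ|) / 2) ≤ ‖Gamma (1 + I * τ)‖ := by
  rcases eq_or_ne τ 0 with rfl | hτ
  · simp
  refine pow_le_pow_iff_left₀ (Real.exp_pos _).le (norm_nonneg _) two_ne_zero |>.1 ?_
  rw [norm_Gamma_one_add_I_mul_sq hτ, ← Real.exp_nat_mul]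
  have h := Real.exp_neg_abs_le_div_sinh (mul_ne_zero Real.pi_ne_zero hτ)
  rw [abs_mul, abs_of_pos Real.pi_pos] at h
  rwa [show ((2 : ℕ) : ℝ) * (-(π * |τ|) / 2) = -(π * |τ|) by push_cast; ring]

end Complex

lemma Measurable.tsum_of_summable {α E : Type*} [MeasurableSpace α] [NormedAddCommGroup E]
    [MeasurableSpace E] [BorelSpace E] [SecondCountableTopology E] {f : ℕ → α → E}
    (hf : ∀ k, Measurable (f k)) (hs : ∀ a, Summable fun k => f k a) :
    Measurable fun a => ∑' k, f k a :=
  measurable_of_tendsto_metrizable (fun _ => Finset.measurable_sum _ fun k _ => hf k)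
    (tendsto_pi_nhds.2 fun a => (hs a).hasSum.tendsto_sum_nat)

lemma norm_descPochhammer_eval_le (z : ℂ) (j : ℕ) :
    ‖(descPochhammer ℂ j).eval z‖ ≤ (‖z‖ + j) ^ j := by
  induction j with
  | zero => simp
  | succ j ih =>
    rw [descPochhammer_succ_eval, norm_mul, pow_succ]
    gcongr
    · exact ih.trans (by gcongr; simp)
    · exact (norm_sub_le _ _).trans (by simp)

lemma natCast_add_I_mul_add_one_ne_neg_natCast (k : ℕ) (τ : ℝ) (m : ℕ) :
    (k : ℂ) + I * τ + 1 ≠ -m := fun h => by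
  have := congrArg re h
  simp only [add_re, natCast_re, mul_re, I_re, ofReal_re, zero_mul, I_im, ofReal_im, mul_zero,
    sub_self, add_zero, one_re, neg_re] at this
  linarith [(k.cast_nonneg : (0 : ℝ) ≤ k), (m.cast_nonneg : (0 : ℝ) ≤ m)]

/-- `besselTerm ν j k` is the `j`-th derivative of `x ↦ (x / 4) ^ (2k + ν) / (k! Γ(k + ν + 1))`,
the `k`-th term of the series of `x ↦ I_ν(x / 2)`. -/
noncomputable def besselTerm (ν : ℂ) (j k : ℕ) (x : ℝ) : ℂ :=
  (descPochhammer ℂ j).eval (2 * k + ν) * ((x : ℂ) / 4) ^ (2 * k + ν - j) /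
    (4 ^ j * (k ! * Gamma (k + ν + 1)))

lemma hasDerivAt_besselTerm (ν : ℂ) (j k : ℕ) {x : ℝ} (hx : 0 < x) :
    HasDerivAt (besselTerm ν j k) (besselTerm ν (j + 1) k x) x := by
  have hslit : (x : ℂ) / 4 ∈ slitPlane := by
    rw [show (x : ℂ) / 4 = ((x / 4 : ℝ) : ℂ) by push_cast; ring]
    exact ofReal_mem_slitPlane.2 (by positivity)
  have hpow := (((hasDerivAt_id (x : ℂ)).div_const 4).cpow_const
    (c := 2 * k + ν - j) hslit).comp_ofReal
  refine ((hpow.const_mul ((descPochhammer ℂ j).eval (2 * k + ν))).div_const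
    (4 ^ j * (k ! * Gamma (k + ν + 1)))).congr_deriv ?_
  simp only [besselTerm, descPochhammer_succ_eval, id]
  push_cast
  ring_nf

lemma norm_descPochhammer_eval_two_mul_add_I_mul_le (τ : ℝ) (j k : ℕ) :
    ‖(descPochhammer ℂ j).eval (2 * k + I * τ)‖ ≤ ((j + 1) * (1 + |τ|)) ^ j * (3 ^ j) ^ k := by
  have h3 : (2 * k + 1 : ℝ) ≤ 3 ^ k := by
    have := one_add_mul_le_pow (show (-2 : ℝ) ≤ 2 by norm_num) k
    norm_num at this
    linarith
  have hs : ‖(2 * k + I * τ : ℂ)‖ ≤ 2 * k + |τ| := (norm_add_le _ _).trans (by simp)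
  refine (norm_descPochhammer_eval_le _ j).trans ?_
  rw [← pow_mul, mul_comm j, pow_mul, ← mul_pow]
  gcongr
  calc ‖(2 * k + I * τ : ℂ)‖ + j ≤ (j + 1) * (1 + |τ|) * (2 * k + 1) := by
        nlinarith [mul_nonneg (abs_nonneg τ) (by positivity : (0 : ℝ) ≤ j * (2 * k + 1) + 2 * k),
          mul_nonneg (j.cast_nonneg : (0 : ℝ) ≤ j) (k.cast_nonneg : (0 : ℝ) ≤ k)]
    _ ≤ (j + 1) * (1 + |τ|) * 3 ^ k := by gcongr

lemma norm_besselTerm_le {a b : ℝ} (ha : 0 < a) (τ : ℝ) (j k : ℕ) {x : ℝ} (hx : x ∈ Set.Icc a b) :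
    ‖besselTerm (I * τ) j k x‖ ≤
      ((j + 1) * (1 + |τ|) / a) ^ j * Real.exp (π * |τ| / 2) *
        ((3 ^ j * (b / 4) ^ 2) ^ k / k !) := by
  have hx0 : 0 < x := ha.trans_le hx.1
  have hb : 0 < b := hx0.trans_le hx.2
  have hpoch := norm_descPochhammer_eval_two_mul_add_I_mul_le τ j k
  have hpow : ‖((x : ℂ) / 4) ^ (2 * k + I * τ - j)‖ / 4 ^ j ≤ (b / 4) ^ (2 * k) / a ^ j := by
    rw [show (x : ℂ) / 4 = ((x / 4 : ℝ) : ℂ) by push_cast; ring,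
      norm_cpow_eq_rpow_re_of_pos (by positivity)]
    simp only [sub_re, add_re, mul_re, I_re, I_im, ofReal_re, ofReal_im, natCast_re, natCast_im,
      re_ofNat, im_ofNat]
    rw [show 2 * (k : ℝ) - 0 * 0 + (0 * τ - 1 * 0) - j = (2 * k : ℕ) - (j : ℝ) by push_cast; ring,
      Real.rpow_sub (by positivity), Real.rpow_natCast, Real.rpow_natCast, div_div,
      show (x / 4) ^ j * 4 ^ j = x ^ j by rw [← mul_pow]; ring]
    gcongr
    exacts [hx.2, hx.1]
  have hGamma : (k ! : ℝ) * Real.exp (-(π * |τ|) / 2) ≤ ‖Gamma (k + I * τ + 1)‖ := by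
    have := factorial_mul_norm_Gamma_le_norm_Gamma_add (s := 1 + I * τ) (by simp) k
    rw [show 1 + I * τ + k = k + I * τ + 1 by ring] at this
    exact (mul_le_mul_of_nonneg_left (exp_neg_pi_mul_abs_div_two_le_norm_Gamma_one_add_I_mul τ)
      (by positivity)).trans this
  have hk : (1 : ℝ) ≤ k ! := by exact_mod_cast k.factorial_pos
  calc ‖besselTerm (I * τ) j k x‖
      = ‖(descPochhammer ℂ j).eval (2 * k + I * τ)‖ *
          (‖((x : ℂ) / 4) ^ (2 * k + I * τ - j)‖ / 4 ^ j) / (k ! * ‖Gamma (k + I * τ + 1)‖) := by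
        simp only [besselTerm, norm_div, norm_mul, norm_pow, Complex.norm_natCast,
          Complex.norm_ofNat]
        ring
    _ ≤ ((j + 1) * (1 + |τ|)) ^ j * (3 ^ j) ^ k * ((b / 4) ^ (2 * k) / a ^ j) /
          (k ! * (k ! * Real.exp (-(π * |τ|) / 2))) := by gcongr
    _ ≤ ((j + 1) * (1 + |τ|)) ^ j * (3 ^ j) ^ k * ((b / 4) ^ (2 * k) / a ^ j) /
          (k ! * Real.exp (-(π * |τ|) / 2)) := by
        gcongr; exact le_mul_of_one_le_left (by positivity) hk
    _ = ((j + 1) * (1 + |τ|) / a) ^ j * Real.exp (π * |τ| / 2) *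
          ((3 ^ j * (b / 4) ^ 2) ^ k / k !) := by
        rw [show -(π * |τ|) / 2 = -(π * |τ| / 2) by ring, Real.exp_neg]
        simp only [div_pow, mul_pow, ← pow_mul]
        field_simp

lemma ofReal_pow_mul_besselTerm (ν : ℂ) (j k : ℕ) {x : ℝ} (hx : x ≠ 0) :
    (x : ℂ) ^ j * besselTerm ν j k x =
      (descPochhammer ℂ j).eval (2 * k + ν) * besselTerm ν 0 k x := by
  have hx4 : (x : ℂ) / 4 ≠ 0 := by simpa using hx
  simp only [besselTerm, cpow_sub _ _ hx4, cpow_natCast, descPochhammer_zero, Polynomial.eval_one,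
    Nat.cast_zero, sub_zero, pow_zero, one_mul, div_pow]
  field_simp
  simp only [mul_assoc]
  exact mul_div_mul_left _ _ (pow_ne_zero j (ofReal_ne_zero.2 hx))

lemma besselTerm_ode (ν : ℂ) (k : ℕ) {x : ℝ} (hx : x ≠ 0) :
    (x : ℂ) ^ 2 * besselTerm ν 2 k x + x * besselTerm ν 1 k x - ν ^ 2 * besselTerm ν 0 k x =
      4 * k * (k + ν) * besselTerm ν 0 k x := by
  have h1 := ofReal_pow_mul_besselTerm ν 1 k hx
  rw [pow_one] at h1
  rw [ofReal_pow_mul_besselTerm ν 2 k hx, h1]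
  simp only [descPochhammer_succ_eval, descPochhammer_zero, Polynomial.eval_one]
  push_cast
  ring

lemma besselTerm_zero_succ (ν : ℂ) (k : ℕ) (hν : (k : ℂ) + ν + 1 ≠ 0) {x : ℝ} (hx : x ≠ 0) :
    4 * (k + 1) * (k + 1 + ν) * besselTerm ν 0 (k + 1) x =
      (x : ℂ) ^ 2 / 4 * besselTerm ν 0 k x := by
  have hx4 : (x : ℂ) / 4 ≠ 0 := by simpa using hx
  have hk : (k : ℂ) + 1 ≠ 0 := by exact_mod_cast k.succ_ne_zero
  have hGamma : Gamma (↑(k + 1) + ν + 1) = (k + ν + 1) * Gamma (k + ν + 1) := by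
    rw [← Gamma_add_one _ hν]; push_cast; ring_nf
  simp only [besselTerm, descPochhammer_zero, Polynomial.eval_one, Nat.cast_zero, sub_zero,
    pow_zero, one_mul, hGamma, Nat.factorial_succ]
  rw [show 2 * ((k + 1 : ℕ) : ℂ) + ν = (2 * k + ν) + (2 : ℕ) by push_cast; ring, cpow_add _ _ hx4,
    cpow_natCast]
  push_cast
  field_simp
  ring

noncomputable def besselIDeriv (ν : ℂ) (j : ℕ) (x : ℝ) : ℂ := ∑' k, besselTerm ν j k x

lemma besselI_ofReal_div_two (ν : ℂ) (x : ℝ) : besselI ν (x / 2) = besselIDeriv ν 0 x := by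
  simp only [besselI, besselIDeriv, besselTerm, descPochhammer_zero, Polynomial.eval_one,
    Nat.cast_zero, sub_zero, pow_zero, one_mul, div_div, show (2 : ℂ) * 2 = 4 by norm_num]

lemma summable_besselTerm (τ : ℝ) (j : ℕ) {x : ℝ} (hx : 0 < x) :
    Summable fun k => besselTerm (I * τ) j k x :=
  .of_norm_bounded ((Real.summable_pow_div_factorial _).mul_left _)
    fun k => norm_besselTerm_le hx τ j k ⟨le_rfl, le_rfl⟩

lemma hasDerivAt_besselIDeriv (τ : ℝ) (j : ℕ) {x : ℝ} (hx : 0 < x) :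
    HasDerivAt (besselIDeriv (I * τ) j) (besselIDeriv (I * τ) (j + 1) x) x := by
  have hmem : x ∈ Set.Ioo (x / 2) (2 * x) := ⟨by linarith, by linarith⟩
  exact hasDerivAt_tsum_of_isPreconnected ((Real.summable_pow_div_factorial _).mul_left _)
    isOpen_Ioo isPreconnected_Ioo
    (fun k y hy => hasDerivAt_besselTerm _ j k (by linarith [hy.1]))
    (fun k y hy => norm_besselTerm_le (half_pos hx) τ (j + 1) k (Set.Ioo_subset_Icc_self hy))
    hmem (summable_besselTerm τ j hx) hmem

lemma exists_norm_besselIDeriv_le {a b : ℝ} (ha : 0 < a) (j : ℕ) :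
    ∃ C, ∀ τ : ℝ, ∀ x ∈ Set.Icc a b,
      ‖besselIDeriv (I * τ) j x‖ ≤ C * ((1 + |τ|) ^ j * Real.exp (π * |τ| / 2)) := by
  refine ⟨((j + 1) / a) ^ j * ∑' k, (3 ^ j * (b / 4) ^ 2) ^ k / k !, fun τ x hx => ?_⟩
  have h := tsum_of_norm_bounded ((Real.summable_pow_div_factorial _).mul_left _).hasSum
    (norm_besselTerm_le ha τ j · hx)
  rw [tsum_mul_left] at h
  refine h.trans_eq ?_
  rw [mul_div_right_comm, mul_pow, div_pow, div_pow]
  ring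

lemma continuous_besselTerm_I_mul (j k : ℕ) {x : ℝ} (hx : x ≠ 0) :
    Continuous fun τ : ℝ => besselTerm (I * τ) j k x := by
  have hpole := natCast_add_I_mul_add_one_ne_neg_natCast k
  have hGamma : Continuous fun τ : ℝ => Gamma (k + I * τ + 1) :=
    continuous_iff_continuousAt.2 fun τ =>
      (differentiableAt_Gamma _ (hpole τ)).continuousAt.comp
        (f := fun τ : ℝ => (k : ℂ) + I * τ + 1) (by fun_prop)
  refine Continuous.div ?_ (continuous_const.mul (continuous_const.mul hGamma)) fun τ =>
    mul_ne_zero (pow_ne_zero _ (by norm_num))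
      (mul_ne_zero (by exact_mod_cast k.factorial_ne_zero) (Gamma_ne_zero (hpole τ)))
  exact ((descPochhammer ℂ j).continuous.comp (by fun_prop)).mul
    ((by fun_prop : Continuous fun τ : ℝ => 2 * (k : ℂ) + I * τ - j).const_cpow
      (.inl (by simpa using hx)))

lemma measurable_besselIDeriv (j : ℕ) {x : ℝ} (hx : 0 < x) :
    Measurable fun τ : ℝ => besselIDeriv (I * τ) j x :=
  .tsum_of_summable (fun k => (continuous_besselTerm_I_mul j k hx.ne').measurable)
    fun τ => summable_besselTerm τ j hx

lemma besselIDeriv_ode (τ : ℝ) {x : ℝ} (hx : 0 < x) :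
    (x : ℂ) ^ 2 * besselIDeriv (I * τ) 2 x + x * besselIDeriv (I * τ) 1 x +
        (τ : ℂ) ^ 2 * besselIDeriv (I * τ) 0 x = (x : ℂ) ^ 2 / 4 * besselIDeriv (I * τ) 0 x := by
  set T := fun j k => besselTerm (I * τ) j k x
  have hs (j : ℕ) : Summable (T j) := summable_besselTerm τ j hx
  have hterm (k : ℕ) : (x : ℂ) ^ 2 * T 2 k + x * T 1 k + (τ : ℂ) ^ 2 * T 0 k =
      4 * k * (k + I * τ) * T 0 k := by
    linear_combination (by simpa [mul_pow] using besselTerm_ode (I * τ) k hx.ne' :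
      (x : ℂ) ^ 2 * T 2 k + x * T 1 k + (τ : ℂ) ^ 2 * T 0 k = 4 * k * (k + I * τ) * T 0 k)
  have hshift (k : ℕ) : 4 * ((k + 1 : ℕ) : ℂ) * ((k + 1 : ℕ) + I * τ) * T 0 (k + 1) =
      (x : ℂ) ^ 2 / 4 * T 0 k := by
    have hpole : (k : ℂ) + I * τ + 1 ≠ 0 := by
      simpa using natCast_add_I_mul_add_one_ne_neg_natCast k τ 0
    push_cast
    exact besselTerm_zero_succ (I * τ) k hpole hx.ne'
  have hsum : Summable fun k : ℕ => 4 * k * (k + I * τ) * T 0 k :=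
    ((((hs 2).mul_left _).add ((hs 1).mul_left _)).add ((hs 0).mul_left _)).congr hterm
  calc (x : ℂ) ^ 2 * besselIDeriv (I * τ) 2 x + x * besselIDeriv (I * τ) 1 x +
        (τ : ℂ) ^ 2 * besselIDeriv (I * τ) 0 x
      = ∑' k, ((x : ℂ) ^ 2 * T 2 k + x * T 1 k + (τ : ℂ) ^ 2 * T 0 k) := by
        simp only [besselIDeriv]
        rw [Summable.tsum_add (((hs 2).mul_left _).add ((hs 1).mul_left _)) ((hs 0).mul_left _),
          Summable.tsum_add ((hs 2).mul_left _) ((hs 1).mul_left _), tsum_mul_left, tsum_mul_left,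
          tsum_mul_left]
    _ = ∑' k : ℕ, 4 * k * (k + I * τ) * T 0 k := tsum_congr hterm
    _ = ∑' k, (x : ℂ) ^ 2 / 4 * T 0 k := by
        rw [hsum.tsum_eq_zero_add]
        simp only [CharP.cast_eq_zero, mul_zero, zero_mul, zero_add]
        exact tsum_congr hshift
    _ = (x : ℂ) ^ 2 / 4 * besselIDeriv (I * τ) 0 x := tsum_mul_left

lemma one_add_pow_le_mul_exp_half {t : ℝ} (ht : 0 ≤ t) (n : ℕ) :
    (1 + t) ^ n ≤ 2 ^ n * n ! * Real.exp (1 / 2) * Real.exp (t / 2) := by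
  have h := Real.pow_div_factorial_le_exp (x := (1 + t) / 2) (by positivity) n
  rw [div_le_iff₀ (by positivity), div_pow, div_le_iff₀ (by positivity)] at h
  calc (1 + t) ^ n ≤ Real.exp ((1 + t) / 2) * n ! * 2 ^ n := h
    _ = 2 ^ n * n ! * Real.exp (1 / 2) * Real.exp (t / 2) := by
      rw [add_div, Real.exp_add]; ring

lemma exp_mul_div_cosh_le {β θ : ℝ} (hθ : |θ| ≤ β) (τ : ℝ) :
    Real.exp (θ * τ) / Real.cosh (π * τ) ≤ 2 * Real.exp ((β - π) * |τ|) := by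
  rw [div_le_iff₀ (Real.cosh_pos _)]
  have hcosh : Real.exp (π * |τ|) ≤ 2 * Real.cosh (π * τ) := by
    have h := Real.exp_abs_le (π * τ)
    rw [abs_mul, abs_of_pos Real.pi_pos] at h
    rw [Real.cosh_eq]
    linarith
  have hθτ : θ * τ ≤ β * |τ| :=
    (le_abs_self _).trans (by rw [abs_mul]; exact mul_le_mul_of_nonneg_right hθ (abs_nonneg τ))
  calc Real.exp (θ * τ) ≤ Real.exp ((β - π) * |τ|) * Real.exp (π * |τ|) := by
        rw [← Real.exp_add]; gcongr; linarith
    _ ≤ Real.exp ((β - π) * |τ|) * (2 * Real.cosh (π * τ)) := by gcongr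
    _ = 2 * Real.exp ((β - π) * |τ|) * Real.cosh (π * τ) := by ring

/-- The left side is at most a polynomial times `e^{(β - π/2)|τ|}`; the margin `(π - 1) / 2 > 0`
absorbs the polynomial. -/
lemma exists_pow_mul_exp_div_cosh_le (n : ℕ) (β : ℝ) :
    ∃ C, ∀ θ τ : ℝ, |θ| ≤ β →
      (1 + |τ|) ^ n * Real.exp (π * |τ| / 2) * (Real.exp (θ * τ) / Real.cosh (π * τ)) ≤
        C * Real.exp ((β - 1 / 2) * |τ|) := by
  refine ⟨2 * (2 ^ n * n ! * Real.exp (1 / 2)), fun θ τ hθ => ?_⟩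
  have hhalf : Real.exp (|τ| / 2) ≤ Real.exp ((π - 1) / 2 * |τ|) := by
    gcongr
    nlinarith [Real.pi_gt_three, abs_nonneg τ]
  calc (1 + |τ|) ^ n * Real.exp (π * |τ| / 2) * (Real.exp (θ * τ) / Real.cosh (π * τ))
      ≤ 2 ^ n * n ! * Real.exp (1 / 2) * Real.exp ((π - 1) / 2 * |τ|) * Real.exp (π * |τ| / 2) *
          (2 * Real.exp ((β - π) * |τ|)) := by
        gcongr
        · exact (one_add_pow_le_mul_exp_half (abs_nonneg τ) n).trans (by gcongr)
        · exact exp_mul_div_cosh_le hθ τ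
    _ = 2 * (2 ^ n * n ! * Real.exp (1 / 2)) * Real.exp ((β - 1 / 2) * |τ|) := by
        rw [show (β - 1 / 2) * |τ| = (π - 1) / 2 * |τ| + π * |τ| / 2 + (β - π) * |τ| by ring,
          Real.exp_add, Real.exp_add]
        ring

/-- The integrand of `LSsolution`, without the factor `√π e^{-x/2}`, differentiated `j` times in `x`
and `i` times in `θ`. -/
noncomputable def lsIntegrand (g : ℝ → ℂ) (j i : ℕ) (x θ τ : ℝ) : ℂ :=
  (((besselIDeriv (I * τ) j x).re * τ ^ i * Real.exp (θ * τ) / Real.cosh (π * τ) : ℝ) : ℂ) * g τ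

lemma exists_norm_lsIntegrand_le (g : ℝ → ℂ) (j i : ℕ) {a b : ℝ} (ha : 0 < a) (β : ℝ) :
    ∃ C, ∀ x ∈ Set.Icc a b, ∀ θ, |θ| ≤ β → ∀ τ,
      ‖lsIntegrand g j i x θ τ‖ ≤ C * (‖g τ‖ * Real.exp ((β - 1 / 2) * |τ|)) := by
  obtain ⟨C₁, hC₁⟩ := exists_norm_besselIDeriv_le (b := b) ha j
  obtain ⟨C₂, hC₂⟩ := exists_pow_mul_exp_div_cosh_le (j + i) β
  refine ⟨C₁ * C₂, fun x hx θ hθ τ => ?_⟩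
  have hC₁0 : 0 ≤ C₁ :=
    nonneg_of_mul_nonneg_left ((norm_nonneg _).trans (hC₁ τ x hx)) (by positivity)
  have hre : |(besselIDeriv (I * τ) j x).re * τ ^ i| ≤
      C₁ * ((1 + |τ|) ^ (j + i) * Real.exp (π * |τ| / 2)) :=
    calc |(besselIDeriv (I * τ) j x).re * τ ^ i|
        ≤ ‖besselIDeriv (I * τ) j x‖ * (1 + |τ|) ^ i := by
          rw [abs_mul, abs_pow]
          gcongr
          · exact abs_re_le_norm _
          · linarith
      _ ≤ C₁ * ((1 + |τ|) ^ j * Real.exp (π * |τ| / 2)) * (1 + |τ|) ^ i := by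
          gcongr; exact hC₁ τ x hx
      _ = C₁ * ((1 + |τ|) ^ (j + i) * Real.exp (π * |τ| / 2)) := by ring
  have hw : 0 < Real.exp (θ * τ) / Real.cosh (π * τ) := div_pos (Real.exp_pos _) (Real.cosh_pos _)
  calc ‖lsIntegrand g j i x θ τ‖
      = |(besselIDeriv (I * τ) j x).re * τ ^ i| * (Real.exp (θ * τ) / Real.cosh (π * τ)) *
          ‖g τ‖ := by
        rw [lsIntegrand, norm_mul, norm_real, Real.norm_eq_abs, mul_div_assoc, abs_mul,
          abs_of_pos hw]
    _ ≤ C₁ * ((1 + |τ|) ^ (j + i) * Real.exp (π * |τ| / 2) *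
          (Real.exp (θ * τ) / Real.cosh (π * τ))) * ‖g τ‖ := by
        rw [← mul_assoc C₁]; gcongr
    _ ≤ C₁ * (C₂ * Real.exp ((β - 1 / 2) * |τ|)) * ‖g τ‖ := by
        gcongr C₁ * ?_ * _; exact hC₂ θ τ hθ
    _ = C₁ * C₂ * (‖g τ‖ * Real.exp ((β - 1 / 2) * |τ|)) := by ring

lemma measurable_lsIntegrand {g : ℝ → ℂ} (hgm : Measurable g) (j i : ℕ) {x : ℝ} (hx : 0 < x)
    (θ : ℝ) : Measurable (lsIntegrand g j i x θ) := by
  have := measurable_besselIDeriv j hx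
  unfold lsIntegrand
  fun_prop

lemma hasDerivAt_lsIntegrand_fst (g : ℝ → ℂ) (j i : ℕ) {x : ℝ} (hx : 0 < x) (θ τ : ℝ) :
    HasDerivAt (fun y => lsIntegrand g j i y θ τ) (lsIntegrand g (j + 1) i x θ τ) x := by
  have hre := reCLM.hasFDerivAt.comp_hasDerivAt x (hasDerivAt_besselIDeriv τ j hx)
  exact ((((hre.mul_const _).mul_const _).div_const _).ofReal_comp).mul_const (g τ)

lemma hasDerivAt_lsIntegrand_snd (g : ℝ → ℂ) (j i : ℕ) (x θ τ : ℝ) :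
    HasDerivAt (fun t => lsIntegrand g j i x t τ) (lsIntegrand g j (i + 1) x θ τ) θ := by
  have hexp := ((hasDerivAt_id θ).mul_const τ).exp
  refine ((((hexp.const_mul ((besselIDeriv (I * τ) j x).re * τ ^ i)).div_const
    (Real.cosh (π * τ))).ofReal_comp).mul_const (g τ)).congr_deriv ?_
  simp only [lsIntegrand, id]
  push_cast
  ring

lemma HasDerivAt.exp_neg_half_smul {f : ℝ → ℂ} {f' : ℂ} {x : ℝ} (c : ℝ) (hf : HasDerivAt f f' x) :
    HasDerivAt (fun y => (c * Real.exp (-y / 2) : ℝ) • f y)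
      ((c * Real.exp (-x / 2) : ℝ) • (f' - f x / 2)) x := by
  have hE : HasDerivAt (fun y => c * Real.exp (-y / 2)) (c * (Real.exp (-x / 2) * (-1 / 2))) x := by
    simpa using (((hasDerivAt_neg x).div_const 2).exp).const_mul c
  refine (hE.smul hf).congr_deriv ?_
  simp only [real_smul]
  push_cast
  ring

lemma LSsolution_eq_smul_integral (g : ℝ → ℂ) (x θ : ℝ) :
    LSsolution g x θ = (Real.sqrt π * Real.exp (-x / 2) : ℝ) • ∫ τ, lsIntegrand g 0 0 x θ τ := by
  simp only [LSsolution, lsIntegrand, pow_zero, mul_one, ← besselI_ofReal_div_two]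

section integral

variable {g : ℝ → ℂ} {β : ℝ} (hgm : Measurable g)
  (hg : Integrable fun τ => ‖g τ‖ * Real.exp ((β - 1 / 2) * |τ|))
include hgm hg

lemma integrable_lsIntegrand (j i : ℕ) {x θ : ℝ} (hx : 0 < x) (hθ : |θ| ≤ β) :
    Integrable (lsIntegrand g j i x θ) := by
  obtain ⟨C, hC⟩ := exists_norm_lsIntegrand_le g j i hx β (b := x)
  exact (hg.const_mul C).mono' (measurable_lsIntegrand hgm j i hx θ).aestronglyMeasurable
    (ae_of_all _ (hC x ⟨le_rfl, le_rfl⟩ θ hθ))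

lemma hasDerivAt_integral_lsIntegrand_fst (j i : ℕ) {x θ : ℝ} (hx : 0 < x) (hθ : |θ| ≤ β) :
    HasDerivAt (fun y => ∫ τ, lsIntegrand g j i y θ τ) (∫ τ, lsIntegrand g (j + 1) i x θ τ) x := by
  obtain ⟨C, hC⟩ := exists_norm_lsIntegrand_le g (j + 1) i (half_pos hx) β (b := 2 * x)
  have hpos : ∀ y ∈ Set.Icc (x / 2) (2 * x), 0 < y := fun y hy => (half_pos hx).trans_le hy.1
  exact (hasDerivAt_integral_of_dominated_loc_of_deriv_le (Icc_mem_nhds (by linarith) (by linarith))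
    (Filter.eventually_of_mem (Ioi_mem_nhds hx) fun y hy =>
      (measurable_lsIntegrand hgm j i hy θ).aestronglyMeasurable)
    (integrable_lsIntegrand hgm hg j i hx hθ)
    (measurable_lsIntegrand hgm (j + 1) i hx θ).aestronglyMeasurable
    (ae_of_all _ fun τ y hy => hC y hy θ hθ τ) (hg.const_mul C)
    (ae_of_all _ fun τ y hy => hasDerivAt_lsIntegrand_fst g j i (hpos y hy) θ τ)).2

lemma hasDerivAt_integral_lsIntegrand_snd (j i : ℕ) {x θ : ℝ} (hx : 0 < x) (hθ : |θ| < β) :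
    HasDerivAt (fun t => ∫ τ, lsIntegrand g j i x t τ) (∫ τ, lsIntegrand g j (i + 1) x θ τ) θ := by
  obtain ⟨C, hC⟩ := exists_norm_lsIntegrand_le g j (i + 1) hx β (b := x)
  obtain ⟨hθl, hθr⟩ := abs_lt.1 hθ
  exact (hasDerivAt_integral_of_dominated_loc_of_deriv_le (Icc_mem_nhds hθl hθr)
    (.of_forall fun t => (measurable_lsIntegrand hgm j i hx t).aestronglyMeasurable)
    (integrable_lsIntegrand hgm hg j i hx hθ.le)
    (measurable_lsIntegrand hgm j (i + 1) hx θ).aestronglyMeasurable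
    (ae_of_all _ fun τ t ht => hC x ⟨le_rfl, le_rfl⟩ t (abs_le.2 ht) τ) (hg.const_mul C)
    (ae_of_all _ fun τ t _ => hasDerivAt_lsIntegrand_snd g j i x t τ)).2

lemma integral_lsIntegrand_ode {x θ : ℝ} (hx : 0 < x) (hθ : |θ| ≤ β) :
    (x : ℂ) ^ 2 * (∫ τ, lsIntegrand g 2 0 x θ τ) + x * (∫ τ, lsIntegrand g 1 0 x θ τ) +
        (∫ τ, lsIntegrand g 0 2 x θ τ) = (x : ℂ) ^ 2 / 4 * ∫ τ, lsIntegrand g 0 0 x θ τ := by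
  have hint (j i : ℕ) := integrable_lsIntegrand hgm hg j i hx hθ
  have hpt (τ : ℝ) : (x : ℂ) ^ 2 * lsIntegrand g 2 0 x θ τ + x * lsIntegrand g 1 0 x θ τ +
      lsIntegrand g 0 2 x θ τ = (x : ℂ) ^ 2 / 4 * lsIntegrand g 0 0 x θ τ := by
    have hode := besselIDeriv_ode τ hx
    rw [show (x : ℂ) ^ 2 / 4 = ((x ^ 2 / 4 : ℝ) : ℂ) by push_cast; ring] at hode
    have hre := congrArg ofReal (congrArg re hode)
    simp only [add_re, re_ofReal_mul, ← ofReal_pow] at hre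
    simp only [lsIntegrand]
    push_cast at hre ⊢
    linear_combination (Complex.exp (θ * τ) / Complex.cosh (π * τ) * g τ) * hre
  calc (x : ℂ) ^ 2 * (∫ τ, lsIntegrand g 2 0 x θ τ) + x * (∫ τ, lsIntegrand g 1 0 x θ τ) +
        (∫ τ, lsIntegrand g 0 2 x θ τ)
      = ∫ τ, ((x : ℂ) ^ 2 * lsIntegrand g 2 0 x θ τ + x * lsIntegrand g 1 0 x θ τ +
          lsIntegrand g 0 2 x θ τ) := by
        rw [integral_add
            (f := fun τ => (x : ℂ) ^ 2 * lsIntegrand g 2 0 x θ τ + x * lsIntegrand g 1 0 x θ τ)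
            (((hint 2 0).const_mul _).add ((hint 1 0).const_mul _)) (hint 0 2),
          integral_add ((hint 2 0).const_mul _) ((hint 1 0).const_mul _), integral_const_mul,
          integral_const_mul]
    _ = ∫ τ, (x : ℂ) ^ 2 / 4 * lsIntegrand g 0 0 x θ τ := integral_congr_ae (ae_of_all _ hpt)
    _ = (x : ℂ) ^ 2 / 4 * ∫ τ, lsIntegrand g 0 0 x θ τ := integral_const_mul _ _

lemma hasDerivAt_LSsolution_fst {x θ : ℝ} (hx : 0 < x) (hθ : |θ| ≤ β) :
    HasDerivAt (fun y => LSsolution g y θ) ((Real.sqrt π * Real.exp (-x / 2) : ℝ) •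
      ((∫ τ, lsIntegrand g 1 0 x θ τ) - (∫ τ, lsIntegrand g 0 0 x θ τ) / 2)) x := by
  simp only [LSsolution_eq_smul_integral]
  exact (hasDerivAt_integral_lsIntegrand_fst hgm hg 0 0 hx hθ).exp_neg_half_smul _

lemma deriv_deriv_LSsolution_fst {x θ : ℝ} (hx : 0 < x) (hθ : |θ| ≤ β) :
    deriv (deriv fun y => LSsolution g y θ) x = (Real.sqrt π * Real.exp (-x / 2) : ℝ) •
      ((∫ τ, lsIntegrand g 2 0 x θ τ) - (∫ τ, lsIntegrand g 1 0 x θ τ) +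
        (∫ τ, lsIntegrand g 0 0 x θ τ) / 4) := by
  have hderiv : deriv (fun y => LSsolution g y θ) =ᶠ[𝓝 x] fun y =>
      (Real.sqrt π * Real.exp (-y / 2) : ℝ) •
        ((∫ τ, lsIntegrand g 1 0 y θ τ) - (∫ τ, lsIntegrand g 0 0 y θ τ) / 2) :=
    Filter.eventually_of_mem (Ioi_mem_nhds hx) fun y hy =>
      (hasDerivAt_LSsolution_fst hgm hg hy hθ).deriv
  rw [hderiv.deriv_eq]
  refine ((((hasDerivAt_integral_lsIntegrand_fst hgm hg 1 0 hx hθ).sub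
    ((hasDerivAt_integral_lsIntegrand_fst hgm hg 0 0 hx hθ).div_const 2)).exp_neg_half_smul
      _).deriv).trans ?_
  simp only [Pi.sub_apply]
  congr 1
  ring

lemma deriv_deriv_LSsolution_snd {x θ : ℝ} (hx : 0 < x) (hθ : |θ| < β) :
    deriv (deriv fun t => LSsolution g x t) θ =
      (Real.sqrt π * Real.exp (-x / 2) : ℝ) • ∫ τ, lsIntegrand g 0 2 x θ τ := by
  have hderiv : deriv (fun t => LSsolution g x t) =ᶠ[𝓝 θ] fun t =>
      (Real.sqrt π * Real.exp (-x / 2) : ℝ) • ∫ τ, lsIntegrand g 0 1 x t τ := by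
    refine Filter.eventually_of_mem (isOpen_lt continuous_abs continuous_const |>.mem_nhds hθ)
      fun t ht => ?_
    simp only [LSsolution_eq_smul_integral]
    exact ((hasDerivAt_integral_lsIntegrand_snd hgm hg 0 0 hx ht).const_smul
      (Real.sqrt π * Real.exp (-x / 2) : ℝ)).deriv
  rw [hderiv.deriv_eq]
  exact ((hasDerivAt_integral_lsIntegrand_snd hgm hg 0 1 hx hθ).const_smul
    (Real.sqrt π * Real.exp (-x / 2) : ℝ)).deriv

end integral

theorem LSsolution_solves_pde_general (g : ℝ → ℂ) (hgm : Measurable g) (β : ℝ)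
    (hg : Integrable (fun τ => ‖g τ‖ * Real.exp ((β - 1 / 2) * |τ|))) :
    (∀ θ : ℝ, 0 ≤ θ → θ < β → ∀ r : ℝ, 0 < r →
        Integrable (fun τ : ℝ =>
          (((besselI (Complex.I * τ) ((r : ℂ) / 2)).re * Real.exp (θ * τ) /
              Real.cosh (π * τ) : ℝ) : ℂ) * g τ)) ∧
      ∀ r : ℝ, 0 < r → ∀ θ : ℝ, 0 ≤ θ → θ < β →
        deriv (deriv (fun r' : ℝ => LSsolution g r' θ)) r +
            ((1 / r + 1 : ℝ) : ℂ) * deriv (fun r' : ℝ => LSsolution g r' θ) r +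
            ((1 / r ^ 2 : ℝ) : ℂ) * deriv (deriv (fun θ' : ℝ => LSsolution g r θ')) θ +
            LSsolution g r θ / (2 * (r : ℂ)) = 0 := by
  refine ⟨fun θ hθ hθβ r hr => ?_, fun r hr θ hθ hθβ => ?_⟩
  · have h : Integrable fun τ => lsIntegrand g 0 0 r θ τ :=
      integrable_lsIntegrand hgm hg 0 0 hr (abs_le.2 ⟨by linarith, hθβ.le⟩)
    simp only [lsIntegrand, pow_zero, mul_one, ← besselI_ofReal_div_two] at h
    exact h
  · have hθabs : |θ| < β := abs_lt.2 ⟨by linarith, hθβ⟩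
    have hode := integral_lsIntegrand_ode hgm hg hr hθabs.le
    rw [deriv_deriv_LSsolution_fst hgm hg hr hθabs.le,
      (hasDerivAt_LSsolution_fst hgm hg hr hθabs.le).deriv,
      deriv_deriv_LSsolution_snd hgm hg hr hθabs, LSsolution_eq_smul_integral]
    simp only [real_smul]
    set E : ℂ := ((Real.sqrt π * Real.exp (-r / 2) : ℝ) : ℂ)
    have hr' : (r : ℂ) ≠ 0 := ofReal_ne_zero.2 hr.ne'
    push_cast
    field_simp
    linear_combination 8 * E * hode

theorem LSsolution_solves_pde (g : ℝ → ℂ) (hgm : Measurable g) (β : ℝ)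
    (hβ : β ∈ Set.Ioo 0 (2 * π))
    (hg : Integrable (fun τ => ‖g τ‖ * Real.exp ((β - 1 / 2) * |τ|))) :
    (∀ θ : ℝ, 0 ≤ θ → θ < β → ∀ r : ℝ, 0 < r →
        Integrable (fun τ : ℝ =>
          (((besselI (Complex.I * τ) ((r : ℂ) / 2)).re * Real.exp (θ * τ) /
              Real.cosh (π * τ) : ℝ) : ℂ) * g τ)) ∧
      ∀ r : ℝ, 0 < r → ∀ θ : ℝ, 0 ≤ θ → θ < β →
        deriv (deriv (fun r' : ℝ => LSsolution g r' θ)) r +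
            ((1 / r + 1 : ℝ) : ℂ) * deriv (fun r' : ℝ => LSsolution g r' θ) r +
            ((1 / r ^ 2 : ℝ) : ℂ) * deriv (deriv (fun θ' : ℝ => LSsolution g r θ')) θ +
            LSsolution g r θ / (2 * (r : ℂ)) = 0 :=
  LSsolution_solves_pde_general g hgm β hg
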